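/- Let π be a k-colored permutation with insertion pair (P, Q) = (P(π), Q(π)). If the shadow line L_i of the square diagram of π passes through two X's, the leftmost being X^{j_1} and the rightmost being X^{j_2}, then the i-th column of P is a column of height 2 whose top k-ribbon has height j_2 and whose bottom k-ribbon has height k+1−j_2, while the column of Q in the same position is a column of height 2 whose bottom k-ribbon has height j_1 and whose top k-ribbon has height k+1−j_1. -/

import Mathlib

namespace KRF

/-- A letter of the alphabet `{1_1, …, 1_k, 2}`:  `one j` stands for the letter `1_j`
(with `1 ≤ j ≤ k` for genuine letters), and `two` stands for the letter `2`. -/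
inductive Letter (k : ℕ) : Type where
  | one : ℕ → Letter k
  | two : Letter k
deriving DecidableEq

/-- A word over the alphabet `{1_1, …, 1_k, 2}`, listed from the leftmost letter to the
rightmost letter. -/
abbrev Word (k : ℕ) := List (Letter k)

/-- The contribution of a letter to the rank: each `1_j` counts `1` and each `2` counts `2`. -/
def Letter.rank {k : ℕ} : Letter k → ℕ
  | .one _ => 1
  | .two => 2

/-- The rank of a word: the sum of its letters. -/
def Word.rank {k : ℕ} (w : Word k) : ℕ := (w.map Letter.rank).sum

/-- The letter `1_j` is valid when `1 ≤ j ≤ k`. -/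
def Letter.Valid (k : ℕ) : Letter k → Prop
  | .one j => 1 ≤ j ∧ j ≤ k
  | .two => True

/-- A genuine word of the Fibonacci poset `Z(k)`: all of its letters are valid. -/
def Word.Valid (k : ℕ) (w : Word k) : Prop := ∀ l ∈ w, l.Valid k

/-- The cover relation of the Fibonacci poset `Z(k)`:  `z` is covered by `w` iff `z` is
obtained from `w` either by changing a `2` into some `1_j` when all letters to the left of
that `2` are `2`'s, or by deleting the leftmost letter of the form `1_j`. -/
def ZCovers (k : ℕ) (z w : Word k) : Prop :=
  (∃ (p s : Word k) (j : ℕ), (∀ l ∈ p, l = Letter.two) ∧ 1 ≤ j ∧ j ≤ k ∧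
      w = p ++ Letter.two :: s ∧ z = p ++ Letter.one j :: s) ∨
  (∃ (p s : Word k) (j : ℕ), (∀ l ∈ p, l = Letter.two) ∧ 1 ≤ j ∧ j ≤ k ∧
      w = p ++ Letter.one j :: s ∧ z = p ++ s)

/-- `c 0 ⋖ c 1 ⋖ ⋯ ⋖ c n` is a saturated chain in `Z(k)` starting at the empty word. -/
def IsZChain (k n : ℕ) (c : ℕ → Word k) : Prop :=
  c 0 = [] ∧ ∀ i, i < n → ZCovers k (c i) (c (i + 1))

end KRF
namespace KRF

/-- A column of a (tiled and filled) `k`-ribbon Fibonacci tableau.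
`single h v` is a column of height 1 (shape letter `1_h`) tiled by one `k`-ribbon of
height `h` filled with the value `v`.
`double ht hb vt vb` is a column of height 2 (shape letter `2`) tiled by a `k`-ribbon of
height `ht` filled with `vt` stacked on top of a `k`-ribbon of height `hb` (always
`hb = k + 1 - ht` for genuine tableaux) filled with `vb`. -/
inductive Col (k : ℕ) : Type where
  | single : ℕ → ℕ → Col k
  | double : ℕ → ℕ → ℕ → ℕ → Col k
deriving DecidableEq

/-- A (tiled, filled) `k`-ribbon Fibonacci tableau: its list of columns, from the leftmost
column to the rightmost one. -/
abbrev Tab (k : ℕ) := List (Col k)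

/-- The shape letter of a column. -/
def Col.shape {k : ℕ} : Col k → Letter k
  | .single h _ => Letter.one h
  | .double _ _ _ _ => Letter.two

/-- The `k`-ribbon Fibonacci shape (a word) underlying a tableau. -/
def Tab.shape {k : ℕ} (T : Tab k) : Word k := T.map Col.shape

/-- The value in the bottom `k`-ribbon of a column. -/
def Col.bottomVal {k : ℕ} : Col k → ℕ
  | .single _ v => v
  | .double _ _ _ vb => vb

/-- The heights occurring in a column are genuine ribbon heights: between `1` and `k`,
and in a column of height 2 the two heights sum to `k + 1`. -/
def Col.HeightsValid (k : ℕ) : Col k → Prop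
  | .single h _ => 1 ≤ h ∧ h ≤ k
  | .double ht hb _ _ => 1 ≤ ht ∧ ht ≤ k ∧ hb = k + 1 - ht

/-- The list of all entries of a tableau (one for each `k`-ribbon). -/
def Tab.entries {k : ℕ} (T : Tab k) : List ℕ :=
  (T.map fun c => match c with
    | Col.single _ v => [v]
    | Col.double _ _ vt vb => [vt, vb]).flatten

/-- The list of the bottom-ribbon values of the columns of a tableau. -/
def Tab.bottoms {k : ℕ} (T : Tab k) : List ℕ := T.map Col.bottomVal

/-- `T` is a standard `k`-ribbon Fibonacci tableau with entries `1, …, n`: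
heights are valid, the entries are exactly `1, …, n`,  and the tableau can be built by
placing `n, n-1, …, 1` in order, each new `k`-ribbon being either appended (as a new
rightmost height-1 column) to the shape formed by the `k`-ribbons containing larger
entries, or stacked on top of a single such `k`-ribbon.  Equivalently (and this is how we
formalize it): the bottom entries strictly decrease from left to right (in particular the
`k`-ribbon containing the leftmost square of the bottom row contains `n`), and in each
column of height 2 the top entry is smaller than the bottom entry. -/
def IsStandardTab (k n : ℕ) (T : Tab k) : Prop :=
  (∀ c ∈ T, Col.HeightsValid k c) ∧
  (Tab.entries T).Perm (List.range' 1 n) ∧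
  List.Chain' (fun a b => b < a) (Tab.bottoms T) ∧
  (∀ c ∈ T, ∀ ht hb vt vb, c = Col.double ht hb vt vb → vt < vb)

/-- Updating a (partial) path tableau along one cover step `z ⋖ w` of `Z(k)`, placing the
value `i` in the `k` new squares of `w` relative to `z`:  if `w` is obtained from `z` by
inserting a letter `1_j` after the prefix of `2`'s, a new height-1 column with a single
ribbon of height `j` filled with `i` is created there; if `w` is obtained from `z` by
changing the letter `1_h` just after the prefix of `2`'s into a `2`, the `k` new squares
of that column form a `k`-ribbon of height `k + 1 - h` filled with `i`, stacked on top of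
the already present `k`-ribbon of height `h`. -/
def updateTab (k : ℕ) (i : ℕ) : Word k → Word k → Tab k → Tab k
  | Letter.two :: z', Letter.two :: w', c :: T => c :: updateTab k i z' w' T
  | Letter.one h :: _, Letter.two :: _, Col.single _ v :: T =>
      Col.double (k + 1 - h) h i v :: T
  | z, Letter.one j :: w', T => if z = w' then Col.single j i :: T else T
  | _, _, T => T

/-- The `k`-ribbon Fibonacci path tableau determined by a saturated chain in `Z(k)`:
for each `i = 1, …, n` the value `i` is placed in the `k` new squares of `c i` relative
to `c (i-1)`. -/
def chainTab (k : ℕ) (c : ℕ → Word k) : ℕ → Tab k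
  | 0 => []
  | m + 1 => updateTab k (m + 1) (c m) (c (m + 1)) (chainTab k c m)

/-- `T` is a `k`-ribbon Fibonacci path tableau with entries `1, …, n`: it is obtained
from some saturated chain `∅ = c 0 ⋖ c 1 ⋖ ⋯ ⋖ c n` in `Z(k)` by placing `i`'s in the
`k` new squares created at the `i`-th step. -/
def IsPathTab (k n : ℕ) (T : Tab k) : Prop :=
  ∃ c : ℕ → Word k, IsZChain k n c ∧ T = chainTab k c n

end KRF
namespace KRF

/-- A `k`-colored permutation of length `n`: a permutation `x_1 x_2 ⋯ x_n` of `{1, …, n}`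
(here `x_i = perm i + 1`, using `Fin n` positions and values) together with a color
`color i ∈ {1, …, k}` attached to each entry. -/
structure ColoredPerm (n k : ℕ) : Type where
  perm : Equiv.Perm (Fin n)
  color : Fin n → ℕ
  color_pos : ∀ i, 1 ≤ color i
  color_le : ∀ i, color i ≤ k

/-- Insertion of a value `x` of color `j` into a `k`-ribbon Fibonacci tableau: compare `x`
with the value `t` in the `k`-ribbon containing the leftmost square of the bottom row.
If the tableau is empty or `x > t`, a new leftmost height-1 column consisting of a single
`k`-ribbon of height `j` filled with `x` is created.  If `x < t`, a `k`-ribbon of height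
`j` filled with `x` is placed on top of the `k`-ribbon containing `t` (which is forced to
become a `k`-ribbon of height `k + 1 - j`); if a `k`-ribbon of height `l` filled with `b`
was already on top of the ribbon containing `t`, it is bumped out and the value `b` with
color `l` is inserted recursively into the tableau formed by the columns to the right. -/
def insertVal (k : ℕ) (x j : ℕ) : Tab k → Tab k
  | [] => [Col.single j x]
  | c :: rest =>
    if Col.bottomVal c < x then Col.single j x :: c :: rest
    else
      match c with
      | Col.single _ v => Col.double j (k + 1 - j) x v :: rest
      | Col.double ht _ vt vb => Col.double j (k + 1 - j) x vb :: insertVal k vt ht rest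

/-- The insertion tableau obtained after inserting the first `i` colored entries
`x_1^{j_1}, …, x_i^{j_i}` of the `k`-colored permutation `π` into the empty tableau. -/
def PPartial (k n : ℕ) (π : ColoredPerm n k) (i : ℕ) : Tab k :=
  ((List.finRange n).take i).foldl
    (fun T m => insertVal k ((π.perm m : ℕ) + 1) (π.color m) T) []

/-- The insertion tableau `P(π)` of a `k`-colored permutation. -/
def PTab (k n : ℕ) (π : ColoredPerm n k) : Tab k := PPartial k n π n

/-- The chain of shapes of the partial insertion tableaux of `π`. -/
def QChain (k n : ℕ) (π : ColoredPerm n k) (i : ℕ) : Word k :=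
  Tab.shape (PPartial k n π i)

/-- The recording tableau `Q(π)`: it has the same shape as `P(π)`, and after the `i`-th
insertion the value `i` is placed in the `k` squares by which the shape grew at step `i`. -/
def QTab (k n : ℕ) (π : ColoredPerm n k) : Tab k := chainTab k (QChain k n π) n

end KRF
namespace KRF

/-- The recursive construction of the shadow lines of a square diagram, applied to the set
`S` of the positions of the `X`'s not lying on a previously drawn line.  Each line is
recorded as the pair `(i₁, i₂)` where `i₁` is the position (column) of the highest
remaining `X` and `i₂` is the rightmost remaining column containing an `X`; the line
passes through these one or two `X`'s, which are then removed. -/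
def shadowAux (n : ℕ) (p : Equiv.Perm (Fin n)) (S : Finset (Fin n)) :
    List (Fin n × Fin n) :=
  if h : S.Nonempty then
    (p.symm ((S.image p).max' (h.image p)), S.max' h) ::
      shadowAux n p ((S.erase (p.symm ((S.image p).max' (h.image p)))).erase (S.max' h))
  else []
termination_by S.card
decreasing_by
  have h1 : p.symm ((S.image p).max' (h.image p)) ∈ S := by
    obtain ⟨a, ha, hpa⟩ := Finset.mem_image.mp (Finset.max'_mem (S.image p) (h.image p))
    simpa [← hpa] using ha
  calc ((S.erase (p.symm ((S.image p).max' (h.image p)))).erase (S.max' h)).card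
      ≤ (S.erase (p.symm ((S.image p).max' (h.image p)))).card := Finset.card_erase_le
    _ < S.card := Finset.card_erase_lt_of_mem h1

/-- The list of shadow lines `L₁, L₂, …` of the square diagram of the `k`-colored
permutation `π`.  The `s`-th entry is the pair `(i₁, i₂)` of positions of the `X`'s
through which `L_s` passes: `i₁` is the column of the highest `X` on the line and `i₂` is
the rightmost column of an `X` on the line (the line passes through a single `X` exactly
when `i₁ = i₂`; when `i₁ ≠ i₂` the `X` in column `i₁` is the leftmost, higher one). -/
def shadowLines {n k : ℕ} (π : ColoredPerm n k) : List (Fin n × Fin n) :=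
  shadowAux n π.perm Finset.univ

end KRF

/-!
Let `x` be the highest `X` of the diagram and `y` the `X` in its rightmost column, so that `L₁`
passes through `x` and `y`. Since `x` carries the largest value, its insertion creates a new
first column, and every later entry is stacked on top of `x`, bumping the previous occupant into
the columns to the right. Hence the first column of `P` holds `x` at the bottom and `y` on top
(or just `x` when `x = y`), and the remaining columns form the insertion tableau of `π` with `x`
and `y` deleted, whose shadow lines are `L₂, L₃, …`. In `Q` the first column is created when `x`
is inserted and completed at the next step; the remaining columns record the same growth of
shapes as for the smaller permutation, only with shifted labels, which is why tableaux are
compared after erasing their entries (`Col.unfill`).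
-/

namespace Finset

variable {α : Type*} [LinearOrder α]

theorem sort_erase (s : Finset α) (a : α) : (s.erase a).sort = s.sort.erase a :=
  (sortedLT_sort _).eq_of_mem_iff ((sortedLT_sort s).pairwise.sublist List.erase_sublist).sortedLT
    fun b => by rw [mem_sort, (sort_nodup s _).mem_erase_iff, mem_erase, mem_sort]

theorem sort_eq_sort_erase_max'_concat (s : Finset α) (h : s.Nonempty) :
    s.sort = (s.erase (s.max' h)).sort ++ [s.max' h] := by
  refine (sortedLT_sort s).eq_of_mem_iff ?_ fun b => ?_
  · refine List.Pairwise.sortedLT (List.pairwise_append.mpr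
      ⟨(sortedLT_sort _).pairwise, List.pairwise_singleton _ _, fun b hb c hc => ?_⟩)
    rw [mem_sort, mem_erase] at hb
    rw [List.mem_singleton.mp hc]
    exact lt_of_le_of_ne (s.le_max' b hb.2) hb.1
  · simp only [mem_sort, List.mem_append, mem_erase, List.mem_singleton]
    by_cases hb : b = s.max' h
    · simp [hb, s.max'_mem h]
    · simp [hb]

theorem exists_sort_eq_append_cons_append_max' {s : Finset α} (h : s.Nonempty) {a : α}
    (ha : a ∈ s) (hne : a ≠ s.max' h) :
    ∃ l₁ l₂, s.sort = l₁ ++ a :: (l₂ ++ [s.max' h]) ∧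
      ((s.erase a).erase (s.max' h)).sort = l₁ ++ l₂ := by
  have has : a ∈ (s.erase (s.max' h)).sort := (mem_sort _).mpr (mem_erase.mpr ⟨hne, ha⟩)
  obtain ⟨l₁, l₂, hsplit⟩ := List.append_of_mem has
  have ha₁ : a ∉ l₁ := fun ha₁ =>
    List.disjoint_of_nodup_append (hsplit ▸ sort_nodup _ _) ha₁ List.mem_cons_self
  refine ⟨l₁, l₂, by rw [sort_eq_sort_erase_max'_concat s h, hsplit]; simp, ?_⟩
  rw [erase_right_comm, sort_erase, hsplit, List.erase_append_right _ ha₁, List.erase_cons_head]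

end Finset

namespace KRF

def Col.unfill {k : ℕ} : Col k → Col k
  | .single h _ => .single h 0
  | .double ht hb _ _ => .double ht hb 0 0

theorem exists_getElem?_eq_double_of_map_unfill {k : ℕ} {T : Tab k} {i ht hb : ℕ}
    (h : (T.map Col.unfill)[i]? = some (.double ht hb 0 0)) :
    ∃ vt vb, T[i]? = some (.double ht hb vt vb) := by
  rw [List.getElem?_map, Option.map_eq_some_iff] at h
  obtain ⟨c, hc, hcu⟩ := h
  cases c <;> simp_all [Col.unfill]

/-! ### Insertion -/

@[simp] theorem Tab.entries_nil {k : ℕ} : Tab.entries ([] : Tab k) = [] := rfl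

@[simp] theorem Tab.entries_single_cons {k : ℕ} (h v : ℕ) (T : Tab k) :
    Tab.entries (.single h v :: T) = v :: T.entries := rfl

@[simp] theorem Tab.entries_double_cons {k : ℕ} (ht hb vt vb : ℕ) (T : Tab k) :
    Tab.entries (.double ht hb vt vb :: T) = vt :: vb :: T.entries := rfl

theorem insertVal_cons_of_lt {k x : ℕ} (j : ℕ) {c : Col k} (T : Tab k) (h : c.bottomVal < x) :
    insertVal k x j (c :: T) = .single j x :: c :: T := by
  cases c <;> simp_all [insertVal]

theorem insertVal_single_cons_of_le {k x v : ℕ} (j h : ℕ) (T : Tab k) (hx : x ≤ v) :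
    insertVal k x j (.single h v :: T) = .double j (k + 1 - j) x v :: T := by
  simp [insertVal, Col.bottomVal, Nat.not_lt.mpr hx]

theorem insertVal_double_cons_of_le {k x vb : ℕ} (j ht hb vt : ℕ) (T : Tab k) (hx : x ≤ vb) :
    insertVal k x j (.double ht hb vt vb :: T) =
      .double j (k + 1 - j) x vb :: insertVal k vt ht T := by
  simp [insertVal, Col.bottomVal, Nat.not_lt.mpr hx]

theorem entries_insertVal_perm (k x j : ℕ) (T : Tab k) :
    (insertVal k x j T).entries.Perm (x :: T.entries) := by
  induction x, j, T using insertVal.induct with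
  | case1 => simp [insertVal]
  | case2 x j c T hlt => cases c <;> simp [insertVal_cons_of_lt j T hlt]
  | case3 x j T h v hle =>
    simp only [Col.bottomVal, not_lt] at hle
    rw [insertVal_single_cons_of_le j h T hle]
    simp
  | case4 x j T ht hb vt vb hle ih =>
    simp only [Col.bottomVal, not_lt] at hle
    rw [insertVal_double_cons_of_le j ht hb vt T hle]
    simpa using ((ih.cons vb).trans (List.Perm.swap vt vb _)).cons x

theorem insertVal_of_forall_lt {k x : ℕ} (j : ℕ) {T : Tab k} (hT : ∀ v ∈ T.entries, v < x) :
    insertVal k x j T = .single j x :: T := by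
  rcases T with _ | ⟨c, T⟩
  · rfl
  · exact insertVal_cons_of_lt j T (hT _ (by cases c <;> simp [Col.bottomVal]))

def insertionTab (k : ℕ) (L : List (ℕ × ℕ)) : Tab k :=
  L.foldl (fun T e => insertVal k e.1 e.2 T) []

theorem insertionTab_concat (k : ℕ) (L : List (ℕ × ℕ)) (e : ℕ × ℕ) :
    insertionTab k (L ++ [e]) = insertVal k e.1 e.2 (insertionTab k L) := by
  simp [insertionTab]

theorem entries_insertionTab_perm (k : ℕ) (L : List (ℕ × ℕ)) :
    (insertionTab k L).entries.Perm (L.map Prod.fst).reverse := by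
  induction L using List.reverseRecOn with
  | nil => simp [insertionTab]
  | append_singleton L e ih =>
    rw [insertionTab_concat]
    simpa using (entries_insertVal_perm k e.1 e.2 _).trans (ih.cons e.1)

section Maximum

variable {k : ℕ} {A B : List (ℕ × ℕ)} {x : ℕ × ℕ}

theorem insertionTab_max_concat (hA : ∀ e ∈ A, e.1 < x.1) :
    insertionTab k (A ++ [x]) = .single x.2 x.1 :: insertionTab k A := by
  rw [insertionTab_concat]
  refine insertVal_of_forall_lt _ fun v hv => ?_
  obtain ⟨e, he, rfl⟩ :=
    List.mem_map.mp (List.mem_reverse.mp ((entries_insertionTab_perm k A).subset hv))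
  exact hA e he

theorem insertionTab_max_cons_concat (y : ℕ × ℕ) (hA : ∀ e ∈ A, e.1 < x.1)
    (hB : ∀ e ∈ B, e.1 < x.1) (hy : y.1 < x.1) :
    insertionTab k (A ++ x :: (B ++ [y])) =
      .double y.2 (k + 1 - y.2) y.1 x.1 :: insertionTab k (A ++ B) := by
  induction B using List.reverseRecOn generalizing y with
  | nil =>
    rw [List.nil_append, ← List.singleton_append, ← List.append_assoc, insertionTab_concat,
      insertionTab_max_concat hA, List.append_nil]
    exact insertVal_single_cons_of_le _ _ _ hy.le
  | append_singleton B b ih =>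
    have hB' : ∀ e ∈ B, e.1 < x.1 := fun e he => hB e (List.mem_append_left _ he)
    rw [show A ++ x :: (B ++ [b] ++ [y]) = A ++ x :: (B ++ [b]) ++ [y] by simp,
      insertionTab_concat, ih b hB' (hB b (by simp)),
      insertVal_double_cons_of_le _ _ _ _ _ hy.le, ← List.append_assoc, insertionTab_concat]

end Maximum

/-! ### Recording -/

theorem map_unfill_updateTab (k i : ℕ) (z w : Word k) (T : Tab k) :
    (updateTab k i z w T).map Col.unfill = updateTab k 0 z w (T.map Col.unfill) := by
  induction z, w, T using updateTab.induct with
  | case1 z w c T ih => simp [updateTab, ih]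
  | case2 => simp [updateTab, Col.unfill]
  | case3 => simp [updateTab, Col.unfill]
  | case4 z j w T hzw => simp [updateTab, hzw]
  | case5 z w T hnew htwo hgrow =>
    rcases w with _ | ⟨_ | _, w⟩ <;> rcases z with _ | ⟨_ | _, z⟩ <;>
      rcases T with _ | ⟨_ | _, T⟩ <;>
      first
      | exact (htwo _ _ _ _ rfl rfl rfl).elim
      | simp_all [updateTab, Col.unfill]

theorem updateTab_one_cons_self (k i j : ℕ) (z : Word k) (T : Tab k) :
    updateTab k i z (.one j :: z) T = .single j i :: T := by
  rcases z with _ | ⟨_ | _, z⟩ <;> simp [updateTab]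

theorem chainTab_congr {k : ℕ} {c c' : ℕ → Word k} {m : ℕ} (h : ∀ i ≤ m, c i = c' i) :
    chainTab k c m = chainTab k c' m := by
  induction m with
  | zero => rfl
  | succ m ih =>
    simp only [chainTab, h m (by omega), h (m + 1) le_rfl, ih fun i hi => h i (by omega)]

theorem map_unfill_chainTab_add {k : ℕ} {c c' : ℕ → Word k} {a b m : ℕ} {col : Col k}
    (hc : ∀ t ≤ m, c (a + t) = .two :: c' (b + t))
    (ha : (chainTab k c a).map Col.unfill = col :: (chainTab k c' b).map Col.unfill) :
    (chainTab k c (a + m)).map Col.unfill = col :: (chainTab k c' (b + m)).map Col.unfill := by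
  induction m with
  | zero => exact ha
  | succ m ih =>
    have hnext : c (a + m + 1) = .two :: c' (b + m + 1) := hc (m + 1) le_rfl
    rw [← add_assoc, ← add_assoc, chainTab, map_unfill_updateTab, ih fun t ht => hc t (by omega),
      hc m (by omega), hnext, chainTab, map_unfill_updateTab]
    rfl

def shapeChain (k : ℕ) (L : List (ℕ × ℕ)) (m : ℕ) : Word k :=
  (insertionTab k (L.take m)).shape

def recordingTab (k : ℕ) (L : List (ℕ × ℕ)) : Tab k :=
  chainTab k (shapeChain k L) L.length

theorem shapeChain_append_of_le {k m : ℕ} {A : List (ℕ × ℕ)} (X Y : List (ℕ × ℕ))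
    (hm : m ≤ A.length) : shapeChain k (A ++ X) m = shapeChain k (A ++ Y) m := by
  simp only [shapeChain, List.take_append_of_le_length hm]

section Maximum

variable {k : ℕ} {A B : List (ℕ × ℕ)} {x : ℕ × ℕ}

theorem recordingTab_max_concat (hA : ∀ e ∈ A, e.1 < x.1) :
    recordingTab k (A ++ [x]) = .single x.2 (A.length + 1) :: recordingTab k A := by
  have hprefix : chainTab k (shapeChain k (A ++ [x])) A.length = recordingTab k A :=
    chainTab_congr fun i hi => by simpa using shapeChain_append_of_le (k := k) [x] [] hi
  have hlast : shapeChain k (A ++ [x]) (A.length + 1) =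
      .one x.2 :: shapeChain k (A ++ [x]) A.length := by
    rw [shapeChain, List.take_of_length_le (by simp), insertionTab_max_concat hA, shapeChain,
      List.take_left' rfl]
    rfl
  simp only [recordingTab, List.length_append, List.length_singleton, chainTab, hlast,
    updateTab_one_cons_self, hprefix]

theorem shapeChain_max_cons_concat (y : ℕ × ℕ) (hA : ∀ e ∈ A, e.1 < x.1)
    (hB : ∀ e ∈ B, e.1 < x.1) (hy : y.1 < x.1) {t : ℕ} (ht : t ≤ B.length) :
    shapeChain k (A ++ x :: (B ++ [y])) (A.length + 2 + t) =
      .two :: shapeChain k (A ++ B) (A.length + t) := by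
  obtain ⟨z, hz⟩ : ∃ z, (B ++ [y])[t]? = some z :=
    Option.isSome_iff_exists.mp (by simp; omega)
  have hzx : z.1 < x.1 := by
    rcases List.mem_append.mp (List.mem_of_getElem? hz) with hzB | hzy
    · exact hB z hzB
    · simp_all
  have htake : (A ++ x :: (B ++ [y])).take (A.length + 2 + t) = A ++ x :: (B.take t ++ [z]) := by
    rw [show A.length + 2 + t = A.length + (t + 1 + 1) by omega, List.take_length_add_append,
      List.take_succ_cons, List.take_add_one, hz, List.take_append_of_le_length ht]
    rfl
  rw [shapeChain, htake, insertionTab_max_cons_concat z hA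
    (fun e he => hB e (List.mem_of_mem_take he)) hzx, shapeChain, List.take_length_add_append]
  rfl

theorem map_unfill_recordingTab_max_cons_concat (y : ℕ × ℕ) (hA : ∀ e ∈ A, e.1 < x.1)
    (hB : ∀ e ∈ B, e.1 < x.1) (hy : y.1 < x.1) :
    (recordingTab k (A ++ x :: (B ++ [y]))).map Col.unfill =
      .double (k + 1 - x.2) x.2 0 0 :: (recordingTab k (A ++ B)).map Col.unfill := by
  set c := shapeChain k (A ++ x :: (B ++ [y]))
  set c' := shapeChain k (A ++ B)
  have hprefix : chainTab k c A.length = chainTab k c' A.length :=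
    chainTab_congr fun i hi => shapeChain_append_of_le _ _ hi
  have hcA : c A.length = c' A.length := shapeChain_append_of_le _ _ le_rfl
  have hnew : c (A.length + 1) = .one x.2 :: c' A.length := by
    simp only [c, c', shapeChain, List.take_length_add_append, List.take_left' rfl]
    rw [List.take_succ_cons, List.take_zero, insertionTab_max_concat hA]
    rfl
  have hgrow : chainTab k c (A.length + 2) =
      .double (k + 1 - x.2) x.2 (A.length + 2) (A.length + 1) :: chainTab k c' A.length := by
    have htwo : c (A.length + 2) = .two :: c' A.length :=
      shapeChain_max_cons_concat (t := 0) y hA hB hy (Nat.zero_le _)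
    show updateTab k (A.length + 2) (c (A.length + 1)) (c (A.length + 2))
      (updateTab k (A.length + 1) (c A.length) (c (A.length + 1)) (chainTab k c A.length)) = _
    rw [htwo, hnew, hcA, updateTab_one_cons_self, hprefix]
    rfl
  have hlen : (A ++ x :: (B ++ [y])).length = A.length + 2 + B.length := by simp; omega
  rw [recordingTab, recordingTab, hlen, List.length_append]
  exact map_unfill_chainTab_add (fun t ht => shapeChain_max_cons_concat y hA hB hy ht)
    (by rw [hgrow]; rfl)

end Maximum

/-! ### Shadow lines -/

section Shadow

variable {n k : ℕ}

def highestPos (p : Equiv.Perm (Fin n)) (S : Finset (Fin n)) (h : S.Nonempty) : Fin n :=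
  p.symm ((S.image p).max' (h.image p))

theorem highestPos_mem (p : Equiv.Perm (Fin n)) {S : Finset (Fin n)} (h : S.Nonempty) :
    highestPos p S h ∈ S := by
  obtain ⟨m, hm, hpm⟩ := Finset.mem_image.mp ((S.image p).max'_mem (h.image p))
  simpa [highestPos, ← hpm] using hm

theorem apply_lt_apply_highestPos (p : Equiv.Perm (Fin n)) {S : Finset (Fin n)}
    (h : S.Nonempty) {m : Fin n} (hm : m ∈ S) (hne : m ≠ highestPos p S h) :
    p m < p (highestPos p S h) := by
  refine lt_of_le_of_ne ?_ fun hpm => hne (p.injective hpm)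
  simpa [highestPos] using (S.image p).le_max' _ (Finset.mem_image_of_mem p hm)

def shadowRest (p : Equiv.Perm (Fin n)) (S : Finset (Fin n)) (h : S.Nonempty) : Finset (Fin n) :=
  (S.erase (highestPos p S h)).erase (S.max' h)

theorem shadowAux_of_nonempty (p : Equiv.Perm (Fin n)) {S : Finset (Fin n)} (h : S.Nonempty) :
    shadowAux n p S = (highestPos p S h, S.max' h) :: shadowAux n p (shadowRest p S h) := by
  rw [shadowAux, dif_pos h]
  rfl

theorem map_shadowAux_eq {γ : Type*} (p : Equiv.Perm (Fin n)) (G : Finset (Fin n) → List γ)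
    (f : Fin n × Fin n → γ) (hempty : G ∅ = [])
    (hstep : ∀ S (h : S.Nonempty), G S = f (highestPos p S h, S.max' h) :: G (shadowRest p S h))
    (S : Finset (Fin n)) : (shadowAux n p S).map f = G S := by
  induction S using shadowAux.induct n p with
  | case1 S h ih =>
    rw [shadowAux_of_nonempty p h, List.map_cons, hstep S h]
    exact congrArg _ ih
  | case2 S h =>
    rw [shadowAux, dif_neg h, Finset.not_nonempty_iff_eq_empty.mp h, hempty]
    rfl

end Shadow

namespace ColoredPerm

variable {n k : ℕ} (π : ColoredPerm n k)

def entry (m : Fin n) : ℕ × ℕ := ((π.perm m : ℕ) + 1, π.color m)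

def entriesOn (S : Finset (Fin n)) : List (ℕ × ℕ) := S.sort.map π.entry

theorem mem_entriesOn {S : Finset (Fin n)} {e : ℕ × ℕ} :
    e ∈ π.entriesOn S ↔ ∃ m ∈ S, π.entry m = e := by
  simp [entriesOn]

theorem length_entriesOn_univ : (π.entriesOn Finset.univ).length = n := by
  simp [entriesOn]

theorem PPartial_eq_insertionTab (i : ℕ) :
    PPartial k n π i = insertionTab k ((π.entriesOn Finset.univ).take i) := by
  rw [PPartial, entriesOn, Fin.sort_univ, ← List.map_take, insertionTab, List.foldl_map]
  rfl

theorem PTab_eq_insertionTab : PTab k n π = insertionTab k (π.entriesOn Finset.univ) := by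
  rw [PTab, PPartial_eq_insertionTab, List.take_of_length_le π.length_entriesOn_univ.le]

theorem QTab_eq_recordingTab : QTab k n π = recordingTab k (π.entriesOn Finset.univ) := by
  have hchain : QChain k n π = shapeChain k (π.entriesOn Finset.univ) := by
    funext i
    rw [QChain, PPartial_eq_insertionTab, shapeChain]
  rw [QTab, recordingTab, hchain, length_entriesOn_univ]

section Step

variable {S : Finset (Fin n)} (h : S.Nonempty)

theorem entriesOn_of_highestPos_eq (hab : highestPos π.perm S h = S.max' h) :
    π.entriesOn S = π.entriesOn (shadowRest π.perm S h) ++ [π.entry (highestPos π.perm S h)] := by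
  rw [shadowRest, hab, Finset.erase_idem, entriesOn, Finset.sort_eq_sort_erase_max'_concat S h]
  simp [entriesOn]

theorem exists_entriesOn_of_highestPos_ne (hab : highestPos π.perm S h ≠ S.max' h) :
    ∃ A B, π.entriesOn S =
        A ++ π.entry (highestPos π.perm S h) :: (B ++ [π.entry (S.max' h)]) ∧
      π.entriesOn (shadowRest π.perm S h) = A ++ B := by
  obtain ⟨l₁, l₂, hsort, hsortRest⟩ :=
    Finset.exists_sort_eq_append_cons_append_max' h (highestPos_mem π.perm h) hab
  exact ⟨l₁.map π.entry, l₂.map π.entry, by simp [entriesOn, hsort],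
    by simp [entriesOn, shadowRest, hsortRest]⟩

theorem entry_fst_lt_highestPos {m : Fin n} (hm : m ∈ S) (hne : m ≠ highestPos π.perm S h) :
    (π.entry m).1 < (π.entry (highestPos π.perm S h)).1 := by
  simpa [entry] using apply_lt_apply_highestPos π.perm h hm hne

theorem fst_lt_of_mem_entriesOn_shadowRest :
    ∀ e ∈ π.entriesOn (shadowRest π.perm S h), e.1 < (π.entry (highestPos π.perm S h)).1 := by
  intro e he
  obtain ⟨m, hm, rfl⟩ := π.mem_entriesOn.mp he
  obtain ⟨-, hne, hmS⟩ := by simpa [shadowRest] using hm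
  exact π.entry_fst_lt_highestPos h hmS hne

end Step

variable (k) in
def pColumn (l : Fin n × Fin n) : Col k :=
  if l.1 = l.2 then .single (π.color l.1) 0 else .double (π.color l.2) (k + 1 - π.color l.2) 0 0

variable (k) in
def qColumn (l : Fin n × Fin n) : Col k :=
  if l.1 = l.2 then .single (π.color l.1) 0 else .double (k + 1 - π.color l.1) (π.color l.1) 0 0

theorem map_unfill_insertionTab_entriesOn (S : Finset (Fin n)) :
    (insertionTab k (π.entriesOn S)).map Col.unfill = (shadowAux n π.perm S).map π.pColumn := by
  refine (map_shadowAux_eq π.perm (fun T => (insertionTab k (π.entriesOn T)).map Col.unfill) _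
    (by simp [entriesOn, insertionTab]) (fun T hT => ?_) S).symm
  have hlt := π.fst_lt_of_mem_entriesOn_shadowRest hT
  by_cases hab : highestPos π.perm T hT = T.max' hT
  · rw [π.entriesOn_of_highestPos_eq hT hab, insertionTab_max_concat hlt]
    simp [pColumn, hab, Col.unfill, entry]
  · obtain ⟨A, B, hsplit, hrest⟩ := π.exists_entriesOn_of_highestPos_ne hT hab
    rw [hrest] at hlt ⊢
    rw [hsplit, insertionTab_max_cons_concat _ (fun e he => hlt e (List.mem_append_left _ he))
      (fun e he => hlt e (List.mem_append_right _ he))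
      (π.entry_fst_lt_highestPos hT (T.max'_mem hT) (Ne.symm hab))]
    simp [pColumn, hab, Col.unfill, entry]

theorem map_unfill_recordingTab_entriesOn (S : Finset (Fin n)) :
    (recordingTab k (π.entriesOn S)).map Col.unfill = (shadowAux n π.perm S).map π.qColumn := by
  refine (map_shadowAux_eq π.perm (fun T => (recordingTab k (π.entriesOn T)).map Col.unfill) _
    (by simp [entriesOn, recordingTab, chainTab]) (fun T hT => ?_) S).symm
  have hlt := π.fst_lt_of_mem_entriesOn_shadowRest hT
  by_cases hab : highestPos π.perm T hT = T.max' hT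
  · rw [π.entriesOn_of_highestPos_eq hT hab, recordingTab_max_concat hlt]
    simp [qColumn, hab, Col.unfill, entry]
  · obtain ⟨A, B, hsplit, hrest⟩ := π.exists_entriesOn_of_highestPos_ne hT hab
    rw [hrest] at hlt ⊢
    rw [hsplit, map_unfill_recordingTab_max_cons_concat _
      (fun e he => hlt e (List.mem_append_left _ he))
      (fun e he => hlt e (List.mem_append_right _ he))
      (π.entry_fst_lt_highestPos hT (T.max'_mem hT) (Ne.symm hab))]
    simp [qColumn, hab, entry]

theorem map_unfill_PTab : (PTab k n π).map Col.unfill = (shadowLines π).map (π.pColumn k) := by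
  rw [PTab_eq_insertionTab, map_unfill_insertionTab_entriesOn, shadowLines]

theorem map_unfill_QTab : (QTab k n π).map Col.unfill = (shadowLines π).map (π.qColumn k) := by
  rw [QTab_eq_recordingTab, map_unfill_recordingTab_entriesOn, shadowLines]

end ColoredPerm

theorem shadow_double_column_general (k n : ℕ) (π : ColoredPerm n k)
    (i : ℕ) (i₁ i₂ : Fin n) (hline : (shadowLines π)[i]? = some (i₁, i₂)) (hne : i₁ ≠ i₂) :
    (∃ vt vb, (PTab k n π)[i]? =
        some (Col.double (π.color i₂) (k + 1 - π.color i₂) vt vb)) ∧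
    (∃ vt vb, (QTab k n π)[i]? =
        some (Col.double (k + 1 - π.color i₁) (π.color i₁) vt vb)) := by
  constructor <;> apply exists_getElem?_eq_double_of_map_unfill
  · rw [π.map_unfill_PTab, List.getElem?_map, hline]
    simp [ColoredPerm.pColumn, hne]
  · rw [π.map_unfill_QTab, List.getElem?_map, hline]
    simp [ColoredPerm.qColumn, hne]

/-- Let `π` be a `k`-colored permutation with insertion pair
`(P, Q) = (P(π), Q(π))`.  If the shadow line `L_i` of the square diagram of `π` passes
through two `X`'s, the leftmost being `X^{j₁}` (in column `i₁`) and the rightmost being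
`X^{j₂}` (in column `i₂`), then the `i`-th column of `P` has height 2, with top `k`-ribbon
of height `j₂` and bottom `k`-ribbon of height `k + 1 − j₂`, while the column of `Q` in
the same position has height 2, with bottom `k`-ribbon of height `j₁` and top `k`-ribbon
of height `k + 1 − j₁`. -/
theorem shadow_double_column (k n : ℕ) (hk : 1 ≤ k) (π : ColoredPerm n k)
    (i : ℕ) (i₁ i₂ : Fin n) (hline : (shadowLines π)[i]? = some (i₁, i₂)) (hne : i₁ ≠ i₂) :
    (∃ vt vb, (PTab k n π)[i]? =
        some (Col.double (π.color i₂) (k + 1 - π.color i₂) vt vb)) ∧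
    (∃ vt vb, (QTab k n π)[i]? =
        some (Col.double (k + 1 - π.color i₁) (π.color i₁) vt vb)) :=
  shadow_double_column_general k n π i i₁ i₂ hline hne

end KRF
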